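/- arXiv:2403.13964 — 4 statements merged into one kernel-verified Lean document; each statement's English description precedes it below -/
import Mathlib

section
/- Let H be a real Hilbert space, V a closed subspace of H, and P the orthogonal projection of H onto V. Then for all x, y ∈ H, |⟨x, y⟩| ≤ D(x, y|P) ≤ ‖x‖·‖y‖ (enhanced Cauchy–Schwarz inequality). -/
open scoped RealInnerProductSpace

/-!
Write `x = P x + (x - P x)` and `y = P y + (y - P y)`. The cross terms of `⟪x, y⟫` vanish by
orthogonality, so Cauchy–Schwarz applied separately in `V` and in `Vᗮ` gives the lower bound.
By Pythagoras, `‖x‖ = √(‖P x‖² + ‖x - P x‖²)` and likewise for `y`, so the upper bound is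
Cauchy–Schwarz in `ℝ²` for the vectors `(‖P x‖, ‖x - P x‖)` and `(‖P y‖, ‖y - P y‖)`.
-/

theorem Real.mul_add_mul_le_sqrt_mul_sqrt (a b c d : ℝ) :
    a * b + c * d ≤ √(a ^ 2 + c ^ 2) * √(b ^ 2 + d ^ 2) := by
  simpa [Fin.sum_univ_two] using Real.sum_mul_le_sqrt_mul_sqrt Finset.univ ![a, c] ![b, d]

namespace Submodule

variable {𝕜 E : Type*} [RCLike 𝕜] [NormedAddCommGroup E] [InnerProductSpace 𝕜 E]
  (K : Submodule 𝕜 E) [K.HasOrthogonalProjection]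

local notation "⟪" x ", " y "⟫" => inner 𝕜 x y

/-- The quantity `D(x, y | P)` for `P = K.starProjection`. -/
noncomputable def projectionNormBound (x y : E) : ℝ :=
  ‖K.starProjection x‖ * ‖K.starProjection y‖ + ‖x - K.starProjection x‖ * ‖y - K.starProjection y‖

theorem inner_eq_inner_starProjection_add_inner_sub_starProjection (x y : E) :
    ⟪x, y⟫ = ⟪K.starProjection x, K.starProjection y⟫
      + ⟪x - K.starProjection x, y - K.starProjection y⟫ := by
  have hleft : ⟪K.starProjection x, y - K.starProjection y⟫ = 0 :=
    K.inner_right_of_mem_orthogonal (K.starProjection_apply_mem x)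
      (K.sub_starProjection_mem_orthogonal y)
  have hright : ⟪x - K.starProjection x, K.starProjection y⟫ = 0 :=
    K.starProjection_inner_eq_zero x _ (K.starProjection_apply_mem y)
  conv_lhs => rw [← sub_add_cancel x (K.starProjection x), ← sub_add_cancel y (K.starProjection y)]
  simp only [inner_add_left, inner_add_right, hleft, hright]
  ring

theorem norm_inner_le_projectionNormBound (x y : E) : ‖⟪x, y⟫‖ ≤ K.projectionNormBound x y := by
  rw [K.inner_eq_inner_starProjection_add_inner_sub_starProjection x y]
  exact (norm_add_le _ _).trans (add_le_add (norm_inner_le_norm _ _) (norm_inner_le_norm _ _))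

theorem norm_eq_sqrt_norm_starProjection_sq_add (x : E) :
    ‖x‖ = √(‖K.starProjection x‖ ^ 2 + ‖x - K.starProjection x‖ ^ 2) := by
  rw [← K.starProjection_orthogonal_val, ← K.norm_sq_eq_add_norm_sq_starProjection x,
    Real.sqrt_sq (norm_nonneg x)]

theorem projectionNormBound_le_norm_mul_norm (x y : E) :
    K.projectionNormBound x y ≤ ‖x‖ * ‖y‖ := by
  rw [K.norm_eq_sqrt_norm_starProjection_sq_add x, K.norm_eq_sqrt_norm_starProjection_sq_add y]
  exact Real.mul_add_mul_le_sqrt_mul_sqrt _ _ _ _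

end Submodule

theorem enhanced_cauchy_schwarz_general {H : Type*} [NormedAddCommGroup H]
    [InnerProductSpace ℝ H]
    (V : Submodule ℝ H) [Submodule.HasOrthogonalProjection V] (x y : H) :
    |⟪x, y⟫| ≤ ‖(Submodule.orthogonalProjectionOnto V x : H)‖ * ‖(Submodule.orthogonalProjectionOnto V y : H)‖
        + ‖x - (Submodule.orthogonalProjectionOnto V x : H)‖ * ‖y - (Submodule.orthogonalProjectionOnto V y : H)‖ ∧
    ‖(Submodule.orthogonalProjectionOnto V x : H)‖ * ‖(Submodule.orthogonalProjectionOnto V y : H)‖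
        + ‖x - (Submodule.orthogonalProjectionOnto V x : H)‖ * ‖y - (Submodule.orthogonalProjectionOnto V y : H)‖
      ≤ ‖x‖ * ‖y‖ :=
  ⟨(Real.norm_eq_abs _).symm.le.trans (V.norm_inner_le_projectionNormBound x y),
    V.projectionNormBound_le_norm_mul_norm x y⟩

/-- **Enhanced Cauchy–Schwarz inequality.** For a real Hilbert space `H`, a closed
subspace `V` of `H` (equivalently, a subspace admitting an orthogonal projection `P`),
and all `x, y ∈ H`, `|⟨x, y⟩| ≤ ‖Px‖ ‖Py‖ + ‖x - Px‖ ‖y - Py‖ ≤ ‖x‖ ‖y‖`. -/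
theorem enhanced_cauchy_schwarz {H : Type*} [NormedAddCommGroup H]
    [InnerProductSpace ℝ H] [CompleteSpace H]
    (V : Submodule ℝ H) [Submodule.HasOrthogonalProjection V] (x y : H) :
    |⟪x, y⟫| ≤ ‖(Submodule.orthogonalProjectionOnto V x : H)‖ * ‖(Submodule.orthogonalProjectionOnto V y : H)‖
        + ‖x - (Submodule.orthogonalProjectionOnto V x : H)‖ * ‖y - (Submodule.orthogonalProjectionOnto V y : H)‖ ∧
    ‖(Submodule.orthogonalProjectionOnto V x : H)‖ * ‖(Submodule.orthogonalProjectionOnto V y : H)‖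
        + ‖x - (Submodule.orthogonalProjectionOnto V x : H)‖ * ‖y - (Submodule.orthogonalProjectionOnto V y : H)‖
      ≤ ‖x‖ * ‖y‖ :=
  enhanced_cauchy_schwarz_general V x y
end

section
/- Let x, y ∈ ℝⁿ with sample means x̄, ȳ. Then (Σ_{i=1}^n x_i y_i)² ≤ (n·|x̄·ȳ| + √(‖x‖² − n·x̄²)·√(‖y‖² − n·ȳ²))² = ‖x‖²‖y‖² − n·(|x̄|·√(‖y‖² − n·ȳ²) − |ȳ|·√(‖x‖² − n·x̄²))². -/
/-- Squared form of the sample-mean refinement of Cauchy–Schwarz: for `x, y ∈ ℝⁿ`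
with sample means `x̄, ȳ`, `(∑ xᵢyᵢ)² ≤ (n |x̄ ȳ| + √(‖x‖² − n x̄²) √(‖y‖² − n ȳ²))²
= ‖x‖² ‖y‖² − n (|x̄| √(‖y‖² − n ȳ²) − |ȳ| √(‖x‖² − n x̄²))²`. -/
theorem sample_mean_cauchy_schwarz_sq {n : ℕ} (hn : 0 < n)
    (x y : EuclideanSpace ℝ (Fin n)) :
    (∑ i, x i * y i) ^ 2 ≤
        (n * |((∑ i, x i) / n) * ((∑ i, y i) / n)|
          + Real.sqrt (‖x‖ ^ 2 - n * ((∑ i, x i) / n) ^ 2)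
            * Real.sqrt (‖y‖ ^ 2 - n * ((∑ i, y i) / n) ^ 2)) ^ 2 ∧
      (n * |((∑ i, x i) / n) * ((∑ i, y i) / n)|
          + Real.sqrt (‖x‖ ^ 2 - n * ((∑ i, x i) / n) ^ 2)
            * Real.sqrt (‖y‖ ^ 2 - n * ((∑ i, y i) / n) ^ 2)) ^ 2
        = ‖x‖ ^ 2 * ‖y‖ ^ 2
          - n * (|(∑ i, x i) / n| * Real.sqrt (‖y‖ ^ 2 - n * ((∑ i, y i) / n) ^ 2)
              - |(∑ i, y i) / n| * Real.sqrt (‖x‖ ^ 2 - n * ((∑ i, x i) / n) ^ 2)) ^ 2 := by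
  have hn0 : (0:ℝ) < n := by exact_mod_cast hn
  have hnne : (n:ℝ) ≠ 0 := ne_of_gt hn0
  set a : ℝ := (∑ i, x i) / n with ha
  set b : ℝ := (∑ i, y i) / n with hb
  have hx2 : ‖x‖ ^ 2 = ∑ i, x i ^ 2 := by
    rw [EuclideanSpace.norm_eq, Real.sq_sqrt (by positivity)]
    simp [sq_abs]
  have hy2 : ‖y‖ ^ 2 = ∑ i, y i ^ 2 := by
    rw [EuclideanSpace.norm_eq, Real.sq_sqrt (by positivity)]
    simp [sq_abs]
  have hA : ‖x‖ ^ 2 - n * a ^ 2 = ∑ i, (x i - a) ^ 2 := by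
    have : ∑ i, (x i - a) ^ 2 = (∑ i, x i ^ 2) - 2 * a * (∑ i, x i) + n * a ^ 2 := by
      simp [sub_sq, Finset.sum_add_distrib, Finset.sum_sub_distrib, Finset.mul_sum,
        Finset.sum_mul, mul_comm, mul_assoc]
    rw [this, hx2, ha]
    field_simp
    ring
  have hB : ‖y‖ ^ 2 - n * b ^ 2 = ∑ i, (y i - b) ^ 2 := by
    have : ∑ i, (y i - b) ^ 2 = (∑ i, y i ^ 2) - 2 * b * (∑ i, y i) + n * b ^ 2 := by
      simp [sub_sq, Finset.sum_add_distrib, Finset.sum_sub_distrib, Finset.mul_sum,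
        Finset.sum_mul, mul_comm, mul_assoc]
    rw [this, hy2, hb]
    field_simp
    ring
  set A : ℝ := ‖x‖ ^ 2 - n * a ^ 2 with hAdef
  set B : ℝ := ‖y‖ ^ 2 - n * b ^ 2 with hBdef
  have hA0 : 0 ≤ A := by rw [hA]; positivity
  have hB0 : 0 ≤ B := by rw [hB]; positivity
  have hsqA : Real.sqrt A ^ 2 = A := Real.sq_sqrt hA0
  have hsqB : Real.sqrt B ^ 2 = B := Real.sq_sqrt hB0
  have hcov : ∑ i, (x i - a) * (y i - b) = (∑ i, x i * y i) - n * (a * b) := by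
    have : ∑ i, (x i - a) * (y i - b)
        = (∑ i, x i * y i) - b * (∑ i, x i) - a * (∑ i, y i) + n * (a * b) := by
      simp [sub_mul, mul_sub, Finset.sum_add_distrib, Finset.sum_sub_distrib,
        Finset.mul_sum, Finset.sum_mul, mul_comm, mul_assoc]
      ring
    rw [this, ha, hb]
    field_simp
    ring
  have hCS : (∑ i, (x i - a) * (y i - b)) ^ 2 ≤ A * B := by
    rw [hA, hB]
    exact Finset.sum_mul_sq_le_sq_mul_sq Finset.univ (x · - a) (y · - b)
  have hcovabs : |(∑ i, x i * y i) - n * (a * b)| ≤ Real.sqrt A * Real.sqrt B := by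
    rw [← hcov, ← Real.sqrt_sq_eq_abs, ← Real.sqrt_mul hA0]
    exact Real.sqrt_le_sqrt hCS
  constructor
  · have h1 : |∑ i, x i * y i| ≤ n * |a * b| + Real.sqrt A * Real.sqrt B := by
      calc |∑ i, x i * y i| ≤ |(n:ℝ) * (a * b)| + |(∑ i, x i * y i) - n * (a * b)| := by
            have := abs_add_le ((n:ℝ) * (a * b)) ((∑ i, x i * y i) - n * (a * b))
            simpa using this
        _ ≤ n * |a * b| + Real.sqrt A * Real.sqrt B := by
            rw [abs_mul, Nat.abs_cast]
            exact add_le_add le_rfl hcovabs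
    calc (∑ i, x i * y i) ^ 2 = |∑ i, x i * y i| ^ 2 := (sq_abs _).symm
      _ ≤ (n * |a * b| + Real.sqrt A * Real.sqrt B) ^ 2 := by
          apply pow_le_pow_left₀ (abs_nonneg _) h1
  · have hab : |a * b| = |a| * |b| := abs_mul a b
    rw [hab]
    have hx : ‖x‖ ^ 2 = A + n * a ^ 2 := by rw [hAdef]; ring
    have hy : ‖y‖ ^ 2 = B + n * b ^ 2 := by rw [hBdef]; ring
    rw [hx, hy]
    linear_combination ((n:ℝ)^2 * |b|^2 + n * Real.sqrt B ^ 2) * sq_abs a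
      + ((n:ℝ)^2 * a^2 + n * Real.sqrt A ^ 2) * sq_abs b
      + (Real.sqrt B ^ 2 + n * b^2) * hsqA + (A + n * a^2) * hsqB
end

section
/- Let (Ω, 𝓕, Q) be a probability space and X, Y ∈ L²(Q) real-valued random variables with standard deviations σ_X, σ_Y. Then (𝔼[XY])² ≤ 𝔼[X²]·𝔼[Y²] − (|𝔼X|·σ_Y − |𝔼Y|·σ_X)² ≤ 𝔼[X²]·𝔼[Y²] (Walker's refinement of the Cauchy–Schwarz inequality). -/
open MeasureTheory ProbabilityTheory

/-
Since `𝔼[X²] = (𝔼X)² + σ_X²`, the middle term equals `(|𝔼X| |𝔼Y| + σ_X σ_Y)²`. The first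
inequality is then the square of `|𝔼[XY]| ≤ |𝔼X 𝔼Y| + |Cov(X, Y)| ≤ |𝔼X| |𝔼Y| + σ_X σ_Y`,
the last step being the Cauchy–Schwarz inequality for the centred variables.
-/

section

variable {Ω : Type*} [MeasurableSpace Ω] {μ : Measure Ω}

theorem sq_integral_mul_le_integral_sq_mul_integral_sq {f g : Ω → ℝ} (hf : MemLp f 2 μ)
    (hg : MemLp g 2 μ) :
    (∫ ω, f ω * g ω ∂μ) ^ 2 ≤ (∫ ω, f ω ^ 2 ∂μ) * (∫ ω, g ω ^ 2 ∂μ) := by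
  have inner_toLp {u v : Ω → ℝ} (hu : MemLp u 2 μ) (hv : MemLp v 2 μ) :
      inner ℝ (hu.toLp u) (hv.toLp v) = ∫ ω, u ω * v ω ∂μ := by
    rw [L2.inner_def]
    refine integral_congr_ae ?_
    filter_upwards [hu.coeFn_toLp, hv.coeFn_toLp] with ω hu' hv'
    simp [hu', hv', mul_comm]
  simp_rw [sq (f _), sq (g _), ← inner_toLp hf hg, ← inner_toLp hf hf, ← inner_toLp hg hg, sq]
  exact real_inner_mul_inner_self_le _ _

theorem sq_covariance_le_variance_mul_variance [IsFiniteMeasure μ] {X Y : Ω → ℝ}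
    (hX : MemLp X 2 μ) (hY : MemLp Y 2 μ) :
    cov[X, Y; μ] ^ 2 ≤ Var[X; μ] * Var[Y; μ] := by
  rw [covariance, variance_eq_integral hX.aemeasurable, variance_eq_integral hY.aemeasurable]
  exact sq_integral_mul_le_integral_sq_mul_integral_sq
    (hX.sub (memLp_const _)) (hY.sub (memLp_const _))

theorem abs_covariance_le_sqrt_variance_mul_sqrt_variance [IsFiniteMeasure μ] {X Y : Ω → ℝ}
    (hX : MemLp X 2 μ) (hY : MemLp Y 2 μ) :
    |cov[X, Y; μ]| ≤ √Var[X; μ] * √Var[Y; μ] := by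
  rw [← Real.sqrt_sq_eq_abs, ← Real.sqrt_mul (variance_nonneg X μ)]
  exact Real.sqrt_le_sqrt (sq_covariance_le_variance_mul_variance hX hY)

end

theorem sq_le_add_sq_mul_add_sq_sub_sq {c m n s t : ℝ} (h : |c - m * n| ≤ s * t) :
    c ^ 2 ≤ (m ^ 2 + s ^ 2) * (n ^ 2 + t ^ 2) - (|m| * t - |n| * s) ^ 2 := by
  have hc : |c| ≤ |m| * |n| + s * t := by
    have := abs_sub_abs_le_abs_sub c (m * n)
    rw [abs_mul] at this
    linarith
  have identity : (m ^ 2 + s ^ 2) * (n ^ 2 + t ^ 2) - (|m| * t - |n| * s) ^ 2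
      = (|m| * |n| + s * t) ^ 2 := by
    rw [← sq_abs m, ← sq_abs n]; ring
  rw [identity, ← sq_abs c]
  exact pow_le_pow_left₀ (abs_nonneg c) hc 2

/-- **Walker's refinement of the Cauchy–Schwarz inequality.** For square-integrable
real random variables `X, Y` on a probability space, with `σ_X = √(𝔼[X²] − (𝔼X)²)`,
`(𝔼[XY])² ≤ 𝔼[X²] 𝔼[Y²] − (|𝔼X| σ_Y − |𝔼Y| σ_X)² ≤ 𝔼[X²] 𝔼[Y²]`. -/
theorem walker_cauchy_schwarz {Ω : Type*} [MeasurableSpace Ω] (Q : Measure Ω)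
    [IsProbabilityMeasure Q] (X Y : Ω → ℝ)
    (hX : MemLp X 2 Q) (hY : MemLp Y 2 Q) :
    (∫ ω, X ω * Y ω ∂Q) ^ 2 ≤
        (∫ ω, X ω ^ 2 ∂Q) * (∫ ω, Y ω ^ 2 ∂Q)
        - (|∫ ω, X ω ∂Q| * Real.sqrt ((∫ ω, Y ω ^ 2 ∂Q) - (∫ ω, Y ω ∂Q) ^ 2)
            - |∫ ω, Y ω ∂Q| * Real.sqrt ((∫ ω, X ω ^ 2 ∂Q) - (∫ ω, X ω ∂Q) ^ 2)) ^ 2 ∧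
      (∫ ω, X ω ^ 2 ∂Q) * (∫ ω, Y ω ^ 2 ∂Q)
        - (|∫ ω, X ω ∂Q| * Real.sqrt ((∫ ω, Y ω ^ 2 ∂Q) - (∫ ω, Y ω ∂Q) ^ 2)
            - |∫ ω, Y ω ∂Q| * Real.sqrt ((∫ ω, X ω ^ 2 ∂Q) - (∫ ω, X ω ∂Q) ^ 2)) ^ 2
      ≤ (∫ ω, X ω ^ 2 ∂Q) * (∫ ω, Y ω ^ 2 ∂Q) := by
  have hVarX : (∫ ω, X ω ^ 2 ∂Q) - (∫ ω, X ω ∂Q) ^ 2 = Var[X; Q] :=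
    (variance_eq_sub hX).symm
  have hVarY : (∫ ω, Y ω ^ 2 ∂Q) - (∫ ω, Y ω ∂Q) ^ 2 = Var[Y; Q] :=
    (variance_eq_sub hY).symm
  have hsqX : ∫ ω, X ω ^ 2 ∂Q = (∫ ω, X ω ∂Q) ^ 2 + √Var[X; Q] ^ 2 := by
    rw [Real.sq_sqrt (variance_nonneg X Q), ← hVarX]; ring
  have hsqY : ∫ ω, Y ω ^ 2 ∂Q = (∫ ω, Y ω ∂Q) ^ 2 + √Var[Y; Q] ^ 2 := by
    rw [Real.sq_sqrt (variance_nonneg Y Q), ← hVarY]; ring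
  have hcov : |(∫ ω, X ω * Y ω ∂Q) - (∫ ω, X ω ∂Q) * (∫ ω, Y ω ∂Q)|
      ≤ √Var[X; Q] * √Var[Y; Q] := by
    simpa [covariance_eq_sub hX hY] using abs_covariance_le_sqrt_variance_mul_sqrt_variance hX hY
  rw [hVarX, hVarY]
  refine ⟨?_, sub_le_self _ (sq_nonneg _)⟩
  rw [hsqX, hsqY]
  exact sq_le_add_sq_mul_add_sq_sub_sq hcov
end

section
/- Let (Ω, 𝓕, Q) be a probability space, 𝓖 ⊆ 𝓕 a sub-σ-algebra, and X, Y ∈ L²(Q) real random variables. Then |cov(X, Y)| ≤ σ_{𝔼(X|𝓖)}·σ_{𝔼(Y|𝓖)} + √(σ_X² − σ²_{𝔼(X|𝓖)})·√(σ_Y² − σ²_{𝔼(Y|𝓖)}) ≤ σ_X·σ_Y, where 𝔼(·|𝓖) denotes conditional expectation given 𝓖. -/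
/-!
Split `X = 𝔼(X|𝓖) + (X - 𝔼(X|𝓖))`. By the pull-out property the residual
`X - 𝔼(X|𝓖)` is uncorrelated with every square-integrable `𝓖`-measurable variable, so both
the covariance and the variance split into a conditional-expectation part and a residual part.
Cauchy–Schwarz for the covariance on each part gives the first inequality, Cauchy–Schwarz in
`ℝ²` the second.
-/

open MeasureTheory ProbabilityTheory

lemma Real.sqrt_mul_sqrt_add_sqrt_mul_sqrt_le {p q r s : ℝ} (hp : 0 ≤ p) (hq : 0 ≤ q)
    (hr : 0 ≤ r) (hs : 0 ≤ s) :
    √p * √r + √q * √s ≤ √(p + q) * √(r + s) := by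
  simpa [Fin.sum_univ_two] using
    Real.sum_sqrt_mul_sqrt_le Finset.univ (f := ![p, q]) (g := ![r, s])
    (by simp [Fin.forall_fin_two, hp, hq]) (by simp [Fin.forall_fin_two, hr, hs])

namespace ProbabilityTheory

variable {Ω : Type*} {m m₀ : MeasurableSpace Ω} {μ : Measure Ω} {X Y Z : Ω → ℝ}

lemma sq_covariance_le_variance_mul [IsFiniteMeasure μ] (hX : MemLp X 2 μ) (hY : MemLp Y 2 μ) :
    cov[X, Y; μ] ^ 2 ≤ Var[X; μ] * Var[Y; μ] := by
  have hquad : ∀ t : ℝ, 0 ≤ Var[Y; μ] * (t * t) + (-2 * cov[X, Y; μ]) * t + Var[X; μ] := by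
    intro t
    have := variance_nonneg (X - t • Y) μ
    rw [variance_sub hX (hY.const_smul t), variance_smul, covariance_smul_right] at this
    linarith
  have := discrim_le_zero hquad
  rw [discrim] at this
  linarith

lemma abs_covariance_le_sqrt_variance_mul [IsFiniteMeasure μ] (hX : MemLp X 2 μ)
    (hY : MemLp Y 2 μ) : |cov[X, Y; μ]| ≤ √Var[X; μ] * √Var[Y; μ] := by
  rw [← Real.sqrt_mul (variance_nonneg X μ)]
  exact Real.abs_le_sqrt (sq_covariance_le_variance_mul hX hY)

lemma covariance_sub_condExp_eq_zero [IsProbabilityMeasure μ] (hm : m ≤ m₀)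
    (hZm : StronglyMeasurable[m] Z) (hZ : MemLp Z 2 μ) (hY : MemLp Y 2 μ) :
    cov[Z, Y - μ[Y|m]; μ] = 0 := by
  have hYc : MemLp (μ[Y|m]) 2 μ := hY.condExp one_le_two
  have hpull : μ[Z * Y] = μ[Z * μ[Y|m]] := by
    rw [← integral_condExp hm]
    exact integral_congr_ae <| condExp_mul_of_stronglyMeasurable_left hZm
      (hZ.integrable_mul hY) (hY.integrable one_le_two)
  rw [covariance_eq_sub hZ (hY.sub hYc), mul_sub, integral_sub' (hZ.integrable_mul hY)
    (hZ.integrable_mul hYc), integral_sub' (hY.integrable one_le_two) integrable_condExp,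
    integral_condExp hm, hpull]
  ring

lemma covariance_eq_covariance_condExp_add [IsProbabilityMeasure μ] (hm : m ≤ m₀)
    (hX : MemLp X 2 μ) (hY : MemLp Y 2 μ) :
    cov[X, Y; μ] = cov[μ[X|m], μ[Y|m]; μ] + cov[X - μ[X|m], Y - μ[Y|m]; μ] := by
  have hXc : MemLp (μ[X|m]) 2 μ := hX.condExp one_le_two
  have hYc : MemLp (μ[Y|m]) 2 μ := hY.condExp one_le_two
  conv_lhs => rw [← add_sub_cancel (μ[X|m]) X, ← add_sub_cancel (μ[Y|m]) Y]
  rw [covariance_add_left hXc (hX.sub hXc) (hYc.add (hY.sub hYc)),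
    covariance_add_right hXc hYc (hY.sub hYc), covariance_add_right (hX.sub hXc) hYc (hY.sub hYc),
    covariance_comm (X - μ[X|m]),
    covariance_sub_condExp_eq_zero hm stronglyMeasurable_condExp hXc hY,
    covariance_sub_condExp_eq_zero hm stronglyMeasurable_condExp hYc hX]
  ring

lemma variance_eq_variance_condExp_add [IsProbabilityMeasure μ] (hm : m ≤ m₀)
    (hX : MemLp X 2 μ) : Var[X; μ] = Var[μ[X|m]; μ] + Var[X - μ[X|m]; μ] := by
  have hXc : MemLp (μ[X|m]) 2 μ := hX.condExp one_le_two
  rw [← covariance_self hX.aemeasurable, ← covariance_self hXc.aemeasurable,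
    ← covariance_self (hX.sub hXc).aemeasurable]
  exact covariance_eq_covariance_condExp_add hm hX hX

lemma abs_covariance_le_sqrt_variance_condExp_add [IsProbabilityMeasure μ] (hm : m ≤ m₀)
    (hX : MemLp X 2 μ) (hY : MemLp Y 2 μ) :
    |cov[X, Y; μ]| ≤ √Var[μ[X|m]; μ] * √Var[μ[Y|m]; μ]
      + √Var[X - μ[X|m]; μ] * √Var[Y - μ[Y|m]; μ] := by
  have hXc : MemLp (μ[X|m]) 2 μ := hX.condExp one_le_two
  have hYc : MemLp (μ[Y|m]) 2 μ := hY.condExp one_le_two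
  rw [covariance_eq_covariance_condExp_add hm hX hY]
  exact (abs_add_le _ _).trans (add_le_add (abs_covariance_le_sqrt_variance_mul hXc hYc)
    (abs_covariance_le_sqrt_variance_mul (hX.sub hXc) (hY.sub hYc)))

lemma sqrt_variance_condExp_mul_add_le [IsProbabilityMeasure μ] (hm : m ≤ m₀)
    (hX : MemLp X 2 μ) (hY : MemLp Y 2 μ) :
    √Var[μ[X|m]; μ] * √Var[μ[Y|m]; μ] + √Var[X - μ[X|m]; μ] * √Var[Y - μ[Y|m]; μ]
      ≤ √Var[X; μ] * √Var[Y; μ] := by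
  rw [variance_eq_variance_condExp_add hm hX, variance_eq_variance_condExp_add hm hY]
  exact Real.sqrt_mul_sqrt_add_sqrt_mul_sqrt_le (variance_nonneg _ _) (variance_nonneg _ _)
    (variance_nonneg _ _) (variance_nonneg _ _)

end ProbabilityTheory

/-- **Enhanced Cauchy–Schwarz for covariance via conditioning.** For square-integrable
real random variables `X, Y` on a probability space `(Ω, 𝓕, Q)` and a sub-σ-algebra
`𝓖 ⊆ 𝓕`, `|cov(X,Y)| ≤ σ_{𝔼(X|𝓖)} σ_{𝔼(Y|𝓖)} + √(σ_X² − σ²_{𝔼(X|𝓖)}) √(σ_Y² − σ²_{𝔼(Y|𝓖)})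
≤ σ_X σ_Y`. -/
theorem cov_le_D_condexp_le_sigma_mul {Ω : Type*} {m m0 : MeasurableSpace Ω}
    (hm : m ≤ m0) (Q : Measure Ω) [IsProbabilityMeasure Q] (X Y : Ω → ℝ)
    (hX : MemLp X 2 Q) (hY : MemLp Y 2 Q)
    (cov σX σY σcX σcY : ℝ)
    (hcov : cov = ∫ ω, (X ω - ∫ ω', X ω' ∂Q) * (Y ω - ∫ ω', Y ω' ∂Q) ∂Q)
    (hσX : σX = Real.sqrt ((∫ ω, X ω ^ 2 ∂Q) - (∫ ω, X ω ∂Q) ^ 2))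
    (hσY : σY = Real.sqrt ((∫ ω, Y ω ^ 2 ∂Q) - (∫ ω, Y ω ∂Q) ^ 2))
    (hσcX : σcX = Real.sqrt ((∫ ω, (Q[X|m]) ω ^ 2 ∂Q) - (∫ ω, (Q[X|m]) ω ∂Q) ^ 2))
    (hσcY : σcY = Real.sqrt ((∫ ω, (Q[Y|m]) ω ^ 2 ∂Q) - (∫ ω, (Q[Y|m]) ω ∂Q) ^ 2)) :
    |cov| ≤ σcX * σcY + Real.sqrt (σX ^ 2 - σcX ^ 2) * Real.sqrt (σY ^ 2 - σcY ^ 2) ∧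
    σcX * σcY + Real.sqrt (σX ^ 2 - σcX ^ 2) * Real.sqrt (σY ^ 2 - σcY ^ 2) ≤ σX * σY := by
  have hσ {Z : Ω → ℝ} (hZ : MemLp Z 2 Q) :
      √((∫ ω, Z ω ^ 2 ∂Q) - (∫ ω, Z ω ∂Q) ^ 2) = √Var[Z; Q] := by
    rw [variance_eq_sub hZ]; rfl
  have hresidual {Z : Ω → ℝ} (hZ : MemLp Z 2 Q) :
      √Var[Z; Q] ^ 2 - √Var[Q[Z|m]; Q] ^ 2 = Var[Z - Q[Z|m]; Q] := by
    rw [Real.sq_sqrt (variance_nonneg _ _), Real.sq_sqrt (variance_nonneg _ _),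
      variance_eq_variance_condExp_add hm hZ, add_sub_cancel_left]
  subst hcov hσX hσY hσcX hσcY
  rw [hσ hX, hσ hY, hσ (hX.condExp one_le_two), hσ (hY.condExp one_le_two), hresidual hX,
    hresidual hY]
  exact ⟨abs_covariance_le_sqrt_variance_condExp_add hm hX hY,
    sqrt_variance_condExp_mul_add_le hm hX hY⟩
end
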